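/- Let X be a mixture set, n ≥ 2 a finite integer, and ≽ a binary relation on X^n. Then ≽ satisfies axioms F1, F2′, F3, F4, F5, F6, F7 if and only if there exists a pair (u, δ) providing an exponentially discounted expected utility representation for ≽ on X^n. -/

import Mathlib

/-- A mixture set: a set `X` with an operation `mix x l y` (written `xλy` in the paper),
satisfying the Herstein–Milnor axioms for `l, m ∈ [0,1]`. -/
structure MixtureSpace (X : Type*) where
  mix : X → ℝ → X → X
  mix_one : ∀ x y : X, mix x 1 y = x
  mix_comm : ∀ (x y : X), ∀ l ∈ Set.Icc (0:ℝ) 1, mix x l y = mix y (1 - l) x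
  mix_assoc : ∀ (x y : X), ∀ l ∈ Set.Icc (0:ℝ) 1, ∀ m ∈ Set.Icc (0:ℝ) 1,
    mix (mix x m y) l y = mix x (l * m) y

/-- `u : X → ℝ` is mixture linear. -/
def MixtureSpace.linear {X : Type*} (M : MixtureSpace X) (u : X → ℝ) : Prop :=
  ∀ (x y : X), ∀ l ∈ Set.Icc (0:ℝ) 1, u (M.mix x l y) = l * u x + (1 - l) * u y

/-- Strict (asymmetric) part of a relation. -/
def strictP {α : Type*} (R : α → α → Prop) (x y : α) : Prop := R x y ∧ ¬ R y x

/-- Componentwise mixture of finite streams. -/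
def mixStream {X : Type*} (M : MixtureSpace X) {n : ℕ} (x : Fin n → X) (l : ℝ)
    (y : Fin n → X) : Fin n → X := fun t => M.mix (x t) l (y t)

/-- Componentwise mixture of infinite streams. -/
def mixSeq {X : Type*} (M : MixtureSpace X) (x : ℕ → X) (l : ℝ) (y : ℕ → X) :
    ℕ → X := fun t => M.mix (x t) l (y t)

/-! ### Finite-horizon axioms -/

/-- F1: weak order (complete and transitive). -/
def AxF1 {X : Type*} {n : ℕ} (R : (Fin n → X) → (Fin n → X) → Prop) : Prop :=
  (∀ x y, R x y ∨ R y x) ∧ Transitive R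

/-- F2: non-triviality (a ≻ b for some a, b in the induced relation). -/
def AxF2 {X : Type*} {n : ℕ} (R : (Fin n → X) → (Fin n → X) → Prop) : Prop :=
  ∃ a b : X, strictP R (fun _ => a) (fun _ => b)

/-- F3: mixture independence. -/
def AxF3 {X : Type*} (M : MixtureSpace X) {n : ℕ}
    (R : (Fin n → X) → (Fin n → X) → Prop) : Prop :=
  ∀ x y z : Fin n → X, ∀ l ∈ Set.Ioo (0:ℝ) 1,
    (R x y ↔ R (mixStream M x l z) (mixStream M y l z))

/-- F4: mixture continuity. -/
def AxF4 {X : Type*} (M : MixtureSpace X) {n : ℕ}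
    (R : (Fin n → X) → (Fin n → X) → Prop) : Prop :=
  ∀ x y z : Fin n → X,
    IsClosed {l : ℝ | l ∈ Set.Icc (0:ℝ) 1 ∧ R (mixStream M x l z) y} ∧
    IsClosed {l : ℝ | l ∈ Set.Icc (0:ℝ) 1 ∧ R y (mixStream M x l z)}

/-- F5: monotonicity. -/
def AxF5 {X : Type*} {n : ℕ} (R : (Fin n → X) → (Fin n → X) → Prop) : Prop :=
  ∀ x y : Fin n → X, (∀ t, R (fun _ => x t) (fun _ => y t)) → R x y

/-- `(u, w)` provides an AA representation for `R` on `X^n`. -/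
def AARep {X : Type*} (M : MixtureSpace X) {n : ℕ}
    (R : (Fin n → X) → (Fin n → X) → Prop) (u : X → ℝ) (w : Fin n → ℝ) : Prop :=
  M.linear u ∧ (∃ a b : X, u a ≠ u b) ∧ (∀ t, 0 ≤ w t) ∧ (∃ t, 0 < w t) ∧
  ∀ x y : Fin n → X, (R x y ↔ (∑ t, w t * u (x t)) ≥ ∑ t, w t * u (y t))

/-! ### Infinite-horizon notions -/

/-- Ultimately constant stream (equals `x0` from some period on). -/
def UltConst {X : Type*} (x0 : X) (x : ℕ → X) : Prop := ∃ T, ∀ t, T ≤ t → x t = x0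

/-- Member of `X**`: ultimately constant or constant. -/
def InXSS {X : Type*} (x0 : X) (x : ℕ → X) : Prop :=
  UltConst x0 x ∨ ∃ a, ∀ t, x t = a

/-- `[a]_k`: the stream with `a` in period `k` and `x0` elsewhere. -/
def bracket {X : Type*} (x0 : X) (a : X) (k : ℕ) : ℕ → X :=
  fun t => if t = k then a else x0

/-- `(x₁, …, x_{k−1}, a, x_{k+1}, …, x_T, x0, x0, …)`. -/
def truncMod {X : Type*} (x0 : X) (x : ℕ → X) (k : ℕ) (a : X) (T : ℕ) : ℕ → X :=
  fun t => if t = k then a else if t ≤ T then x t else x0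

/-- I1: weak order. -/
def AxI1 {X : Type*} (R : (ℕ → X) → (ℕ → X) → Prop) : Prop :=
  (∀ x y, R x y ∨ R y x) ∧ Transitive R

/-- I2: non-triviality `a ≻ x0 ≻ b` in the induced relation. -/
def AxI2 {X : Type*} (x0 : X) (R : (ℕ → X) → (ℕ → X) → Prop) : Prop :=
  ∃ a b : X, strictP R (fun _ => a) (fun _ => x0) ∧ strictP R (fun _ => x0) (fun _ => b)

/-- I3: mixture independence on `X**`. -/
def AxI3 {X : Type*} (M : MixtureSpace X) (x0 : X)
    (R : (ℕ → X) → (ℕ → X) → Prop) : Prop :=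
  ∀ x y z : ℕ → X, InXSS x0 x → InXSS x0 y → InXSS x0 z →
    ∀ l ∈ Set.Ioo (0:ℝ) 1, (R x y ↔ R (mixSeq M x l z) (mixSeq M y l z))

/-- I4: mixture continuity. -/
def AxI4 {X : Type*} (M : MixtureSpace X) (x0 : X)
    (R : (ℕ → X) → (ℕ → X) → Prop) : Prop :=
  ∀ x z : ℕ → X, InXSS x0 x → InXSS x0 z → ∀ y : ℕ → X,
    IsClosed {l : ℝ | l ∈ Set.Icc (0:ℝ) 1 ∧ R (mixSeq M x l z) y} ∧
    IsClosed {l : ℝ | l ∈ Set.Icc (0:ℝ) 1 ∧ R y (mixSeq M x l z)}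

/-- I5: monotonicity. -/
def AxI5 {X : Type*} (R : (ℕ → X) → (ℕ → X) → Prop) : Prop :=
  ∀ x y : ℕ → X, (∀ t, R (fun _ => x t) (fun _ => y t)) → R x y

/-- I6: convergence. -/
def AxI6 {X : Type*} (x0 : X) (R : (ℕ → X) → (ℕ → X) → Prop) : Prop :=
  ∀ (x : ℕ → X) (a : X) (k : ℕ),
    (strictP R (bracket x0 a k) (bracket x0 (x k) k) →
      ∃ Tp, k ≤ Tp ∧ ∀ T, Tp ≤ T → R (truncMod x0 x k a T) x) ∧
    (strictP R (bracket x0 (x k) k) (bracket x0 a k) →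
      ∃ Tm, k ≤ Tm ∧ ∀ T, Tm ≤ T → R x (truncMod x0 x k a T))

/-- `(u, w)` provides an AA representation for `R` on `X^∞` (with its
discounted-utility series converging for every stream). -/
def AARepInf {X : Type*} (M : MixtureSpace X)
    (R : (ℕ → X) → (ℕ → X) → Prop) (u : X → ℝ) (w : ℕ → ℝ) : Prop :=
  M.linear u ∧ (∃ a b : X, u a ≠ u b) ∧ (∀ t, 0 ≤ w t) ∧ (∃ t, 0 < w t) ∧
  ∃ U : (ℕ → X) → ℝ,
    (∀ x : ℕ → X, Filter.Tendsto (fun N => ∑ t ∈ Finset.range N, w t * u (x t))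
      Filter.atTop (nhds (U x))) ∧
    ∀ x y : ℕ → X, (R x y ↔ U x ≥ U y)

/-! ### Exponential discounting -/

/-- F2′: essentiality of period 1. -/
def AxF2' {X : Type*} {n : ℕ} (R : (Fin n → X) → (Fin n → X) → Prop)
    (h0 : 0 < n) : Prop :=
  ∃ (a b : X) (x : Fin n → X),
    strictP R (Function.update x ⟨0, h0⟩ a) (Function.update x ⟨0, h0⟩ b)

/-- F6: impatience. -/
def AxF6 {X : Type*} {n : ℕ} (R : (Fin n → X) → (Fin n → X) → Prop)
    (h0 : 0 < n) (h1 : 1 < n) : Prop :=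
  ∀ a b : X, strictP R (fun _ => a) (fun _ => b) →
    ∀ x : Fin n → X,
      strictP R (Function.update (Function.update x ⟨0, h0⟩ a) ⟨1, h1⟩ b)
               (Function.update (Function.update x ⟨0, h0⟩ b) ⟨1, h1⟩ a)

/-- `(x₂, …, xₙ, a)`. -/
def shiftApp {X : Type*} {n : ℕ} (x : Fin n → X) (a : X) : Fin n → X :=
  fun t => if h : (t : ℕ) + 1 < n then x ⟨(t : ℕ) + 1, h⟩ else a

/-- F7: stationarity. -/
def AxF7 {X : Type*} {n : ℕ} (R : (Fin n → X) → (Fin n → X) → Prop)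
    (h0 : 0 < n) : Prop :=
  ∀ (a : X) (x y : Fin n → X),
    (R (Function.update x ⟨0, h0⟩ a) (Function.update y ⟨0, h0⟩ a) ↔
     R (shiftApp x a) (shiftApp y a))

/-- `(u, δ)` provides an exponentially discounted expected utility representation. -/
def ExpRep {X : Type*} (M : MixtureSpace X) {n : ℕ}
    (R : (Fin n → X) → (Fin n → X) → Prop) (u : X → ℝ) (δ : ℝ) : Prop :=
  M.linear u ∧ (∃ a b : X, u a ≠ u b) ∧ δ ∈ Set.Ioo (0:ℝ) 1 ∧
  ∀ x y : Fin n → X,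
    (R x y ↔ (∑ t : Fin n, δ ^ (t : ℕ) * u (x t)) ≥ ∑ t : Fin n, δ ^ (t : ℕ) * u (y t))

/-- I2′: essentiality of period 1 (infinite horizon). -/
def AxI2' {X : Type*} (x0 : X) (R : (ℕ → X) → (ℕ → X) → Prop) : Prop :=
  ∃ a b : X, strictP R (bracket x0 a 0) (fun _ => x0) ∧
    strictP R (fun _ => x0) (bracket x0 b 0)

/-- `(a, x₁, x₂, …)`. -/
def consSeq {X : Type*} (a : X) (x : ℕ → X) : ℕ → X :=
  fun t => if t = 0 then a else x (t - 1)

/-- I7: stationarity (infinite horizon). -/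
def AxI7 {X : Type*} (R : (ℕ → X) → (ℕ → X) → Prop) : Prop :=
  ∀ (a : X) (x y : ℕ → X), (R (consSeq a x) (consSeq a y) ↔ R x y)

/-- `(u, δ)` provides an exponentially discounted expected utility representation
on `X^∞`, with converging series. -/
def ExpRepInf {X : Type*} (M : MixtureSpace X)
    (R : (ℕ → X) → (ℕ → X) → Prop) (u : X → ℝ) (δ : ℝ) : Prop :=
  M.linear u ∧ (∃ a b : X, u a ≠ u b) ∧ δ ∈ Set.Ioo (0:ℝ) 1 ∧
  ∃ U : (ℕ → X) → ℝ,
    (∀ x : ℕ → X, Filter.Tendsto (fun N => ∑ t ∈ Finset.range N, δ ^ t * u (x t))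
      Filter.atTop (nhds (U x))) ∧
    ∀ x y : ℕ → X, (R x y ↔ U x ≥ U y)

/-! ### Semi-hyperbolic discounting -/

/-- The SH(T) discount function at (1-based) period `t`:
`D 1 = 1`, `D t = β₁⋯β_{t−1} δ^{t−1}` for `2 ≤ t ≤ T`,
`D t = β₁⋯β_{T−1} δ^{t−1}` for `t > T`. -/
noncomputable def SHD (T : ℕ) (β : ℕ → ℝ) (δ : ℝ) (t : ℕ) : ℝ :=
  (∏ i ∈ Finset.Icc 1 (min t T - 1), β i) * δ ^ (t - 1)

/-- Parameter restrictions: `0 < β₁ ≤ … ≤ β_{T−1} ≤ 1` and `δ ∈ (0,1)`. -/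
def SHParams (T : ℕ) (β : ℕ → ℝ) (δ : ℝ) : Prop :=
  (∀ i : ℕ, 1 ≤ i → i ≤ T - 1 → 0 < β i ∧ β i ≤ 1) ∧
  (∀ i : ℕ, 1 ≤ i → i + 1 ≤ T - 1 → β i ≤ β (i + 1)) ∧
  δ ∈ Set.Ioo (0:ℝ) 1

/-- `(u, β, δ)` provides an SH(T) discounted expected utility representation on `X^n`. -/
def SHRep {X : Type*} (M : MixtureSpace X) {n : ℕ}
    (R : (Fin n → X) → (Fin n → X) → Prop)
    (T : ℕ) (β : ℕ → ℝ) (δ : ℝ) (u : X → ℝ) : Prop :=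
  M.linear u ∧ (∃ a b : X, u a ≠ u b) ∧ SHParams T β δ ∧
  ∀ x y : Fin n → X,
    (R x y ↔ (∑ s : Fin n, SHD T β δ ((s : ℕ) + 1) * u (x s)) ≥
      ∑ s : Fin n, SHD T β δ ((s : ℕ) + 1) * u (y s))

/-- F2″: essentiality of (1-based) periods `1, …, T`. -/
def AxF2'' {X : Type*} {n : ℕ} (R : (Fin n → X) → (Fin n → X) → Prop)
    (T : ℕ) (hTn : T ≤ n) : Prop :=
  ∃ (a b : X) (x : Fin n → X), ∀ i : ℕ, ∀ hi : i < T,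
    strictP R (Function.update x ⟨i, lt_of_lt_of_le hi hTn⟩ a)
             (Function.update x ⟨i, lt_of_lt_of_le hi hTn⟩ b)

/-- F6′: impatience between (1-based) periods `T` and `T+1`. -/
def AxF6' {X : Type*} {n : ℕ} (R : (Fin n → X) → (Fin n → X) → Prop)
    (T : ℕ) (h1 : T - 1 < n) (h2 : T < n) : Prop :=
  ∀ a b : X, strictP R (fun _ => a) (fun _ => b) →
    ∀ x : Fin n → X,
      strictP R (Function.update (Function.update x ⟨T-1, h1⟩ a) ⟨T, h2⟩ b)
               (Function.update (Function.update x ⟨T-1, h1⟩ b) ⟨T, h2⟩ a)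

/-- Delete (0-based) coordinate `i`, shift the rest left, and append `a` at the end. -/
def delIns {X : Type*} {n : ℕ} (x : Fin n → X) (i : ℕ) (a : X) : Fin n → X :=
  fun s => if (s : ℕ) < i then x s
    else if h : (s : ℕ) + 1 < n then x ⟨(s : ℕ) + 1, h⟩ else a

/-- F7′: stationarity from (1-based) period `T`. -/
def AxF7' {X : Type*} {n : ℕ} (R : (Fin n → X) → (Fin n → X) → Prop)
    (T : ℕ) (h1 : T - 1 < n) : Prop :=
  ∀ (a : X) (x y : Fin n → X), (∀ s : Fin n, (s : ℕ) < T - 1 → x s = y s) →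
    (R (Function.update x ⟨T-1, h1⟩ a) (Function.update y ⟨T-1, h1⟩ a) ↔
     R (delIns x (T-1) a) (delIns y (T-1) a))

/-- `(x₁, …, x_{t−2}, a, b, x_{t+2}, …, xₙ, x_{t−1})` where `i` is the 0-based
index of period `t` (so `i = t − 1`). -/
def ebShiftFin {X : Type*} {n : ℕ} (x : Fin n → X) (i : ℕ) (hi : i - 1 < n)
    (a b : X) : Fin n → X :=
  fun s => if (s : ℕ) < i - 1 then x s
    else if (s : ℕ) = i - 1 then a
    else if (s : ℕ) = i then b
    else if h : (s : ℕ) + 1 < n then x ⟨(s : ℕ) + 1, h⟩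
    else x ⟨i - 1, hi⟩

/-- F8: early bias. -/
def AxF8 {X : Type*} {n : ℕ} (R : (Fin n → X) → (Fin n → X) → Prop)
    (T : ℕ) (hTn : T < n) : Prop :=
  ∀ a b c d : X,
    strictP R (fun _ => a) (fun _ => c) → strictP R (fun _ => d) (fun _ => b) →
    ∀ x : Fin n → X, ∀ i : ℕ, ∀ hi1 : 1 ≤ i, ∀ hi2 : i ≤ T - 1,
      (R (Function.update (Function.update x ⟨i, by omega⟩ a) ⟨i+1, by omega⟩ b)
         (Function.update (Function.update x ⟨i, by omega⟩ c) ⟨i+1, by omega⟩ d) ∧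
       R (Function.update (Function.update x ⟨i, by omega⟩ c) ⟨i+1, by omega⟩ d)
         (Function.update (Function.update x ⟨i, by omega⟩ a) ⟨i+1, by omega⟩ b)) →
      R (ebShiftFin x i (by omega) a b) (ebShiftFin x i (by omega) c d)

/-- `(u, β, δ)` provides an SH(T) discounted expected utility representation on `X^∞`. -/
def SHRepInf {X : Type*} (M : MixtureSpace X)
    (R : (ℕ → X) → (ℕ → X) → Prop)
    (T : ℕ) (β : ℕ → ℝ) (δ : ℝ) (u : X → ℝ) : Prop :=
  M.linear u ∧ (∃ a b : X, u a ≠ u b) ∧ SHParams T β δ ∧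
  ∃ U : (ℕ → X) → ℝ,
    (∀ x : ℕ → X, Filter.Tendsto
      (fun N => ∑ t ∈ Finset.range N, SHD T β δ (t + 1) * u (x t))
      Filter.atTop (nhds (U x))) ∧
    ∀ x y : ℕ → X, (R x y ↔ U x ≥ U y)

/-- I2″: essentiality of (1-based) periods `1, …, T`. -/
def AxI2'' {X : Type*} (x0 : X) (R : (ℕ → X) → (ℕ → X) → Prop) (T : ℕ) : Prop :=
  ∃ a b : X, ∀ t : ℕ, t < T →
    strictP R (bracket x0 a t) (fun _ => x0) ∧ strictP R (fun _ => x0) (bracket x0 b t)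

/-- Delete (0-based) coordinate `i` of an infinite stream. -/
def delSeq {X : Type*} (x : ℕ → X) (i : ℕ) : ℕ → X :=
  fun t => if t < i then x t else x (t + 1)

/-- I7′: stationarity from (1-based) period `T`. -/
def AxI7' {X : Type*} (R : (ℕ → X) → (ℕ → X) → Prop) (T : ℕ) : Prop :=
  ∀ (a : X) (x y : ℕ → X), (∀ t, t < T - 1 → x t = y t) →
    (R (Function.update x (T-1) a) (Function.update y (T-1) a) ↔
     R (delSeq x (T-1)) (delSeq y (T-1)))

/-- `(x₁, …, x_{t−2}, a, b, x_{t+2}, …)` where `i = t − 1` (0-based index of period `t`). -/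
def ebShiftSeq {X : Type*} (x : ℕ → X) (i : ℕ) (a b : X) : ℕ → X :=
  fun s => if s < i - 1 then x s
    else if s = i - 1 then a
    else if s = i then b
    else x (s + 1)

/-- I8: early bias (infinite horizon). -/
def AxI8 {X : Type*} (R : (ℕ → X) → (ℕ → X) → Prop) (T : ℕ) : Prop :=
  ∀ a b c d : X,
    strictP R (fun _ => a) (fun _ => c) → strictP R (fun _ => d) (fun _ => b) →
    ∀ x : ℕ → X, ∀ i : ℕ, 1 ≤ i → i ≤ T - 1 →
      (R (Function.update (Function.update x i a) (i+1) b)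
         (Function.update (Function.update x i c) (i+1) d) ∧
       R (Function.update (Function.update x i c) (i+1) d)
         (Function.update (Function.update x i a) (i+1) b)) →
      R (ebShiftSeq x i a b) (ebShiftSeq x i c d)


/-!
The Herstein–Milnor theorem turns F1, F3 and F4 into a mixture-linear utility `U` on streams.
Mixture linearity makes `U` additively separable over periods, and by F5 each period's
component is a nonnegative affine transform of the utility `u` of constant streams, so
`U x = ∑ₜ wₜ u(xₜ)` up to a constant. F2′ forces `w₀ > 0` and F6 forces `w₁ < w₀`. F7 says that
the weight vectors `(w₁, …, wₙ₋₁)` and `(w₀, …, wₙ₋₂)` order streams of length `n - 1` alike,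
so they are proportional and `wₜ = w₀ δᵗ` with `δ = w₁ / w₀`. Conversely, the weights `δᵗ`
satisfy these conditions.
-/

open Set unitInterval

namespace MixtureSpace

variable {Y : Type*} (N : MixtureSpace Y)

lemma mix_zero (x y : Y) : N.mix x 0 y = y := by
  rw [N.mix_comm x y 0 zero_mem, sub_zero, N.mix_one]

lemma mix_self (x : Y) {l : ℝ} (hl : l ∈ I) : N.mix x l x = x := by
  have h := N.mix_assoc x x l hl 0 zero_mem
  rwa [mix_zero, mul_zero, mix_zero] at h

lemma convex_comb_mem {l a b : ℝ} (hl : l ∈ I) (ha : a ∈ I) (hb : b ∈ I) :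
    l * a + (1 - l) * b ∈ I := by
  simpa using convex_Icc (0 : ℝ) 1 ha hb hl.1 (Icc.one_sub_mem hl).1 (add_sub_cancel l 1)

lemma mix_mix_same_left (x y : Y) {μ κ : ℝ} (hμ : μ ∈ I) (hκ : κ ∈ I) :
    N.mix x μ (N.mix x κ y) = N.mix x (1 - (1 - μ) * (1 - κ)) y := by
  rw [N.mix_comm x y κ hκ, N.mix_comm x _ μ hμ,
    N.mix_assoc y x _ (Icc.one_sub_mem hμ) _ (Icc.one_sub_mem hκ),
    N.mix_comm y x _ (mul_mem (Icc.one_sub_mem hμ) (Icc.one_sub_mem hκ))]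

lemma mix_mix (x y : Y) {l m μ : ℝ} (hl : l ∈ I) (hm : m ∈ I) (hμ : μ ∈ I) :
    N.mix (N.mix x l y) μ (N.mix x m y) = N.mix x (μ * l + (1 - μ) * m) y := by
  wlog hml : m ≤ l generalizing l m μ
  · rw [N.mix_comm _ _ μ hμ, this hm hl (Icc.one_sub_mem hμ) (le_of_not_ge hml)]
    ring_nf
  rcases hl.1.eq_or_lt with rfl | hl0
  · obtain rfl : m = 0 := le_antisymm hml hm.1
    simp [mix_zero, mix_self N y hμ]
  -- `x m y` is the mixture `(x l y) (m / l) y`, which reduces everything to `mix_mix_same_left`.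
  have hml' : m / l ∈ I := div_mem hm.1 hl0.le hml
  have hrw : N.mix x m y = N.mix (N.mix x l y) (m / l) y := by
    rw [N.mix_assoc x y _ hml' l hl, div_mul_cancel₀ m hl0.ne']
  rw [hrw, mix_mix_same_left N _ y hμ hml', N.mix_assoc x y _ _ l hl]
  · congr 1
    field_simp
    ring
  · exact Icc.mem_iff_one_sub_mem.2
      (by simpa using mul_mem (Icc.one_sub_mem hμ) (Icc.one_sub_mem hml'))

structure IsVNMPreference (R : Y → Y → Prop) : Prop where
  total : ∀ x y, R x y ∨ R y x
  trans : Transitive R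
  indep : ∀ x y z : Y, ∀ l ∈ Ioo (0 : ℝ) 1, (R x y ↔ R (N.mix x l z) (N.mix y l z))
  closed : ∀ x y z : Y, IsClosed {l : ℝ | l ∈ I ∧ R (N.mix x l z) y} ∧
    IsClosed {l : ℝ | l ∈ I ∧ R y (N.mix x l z)}

variable {N} {R : Y → Y → Prop}

namespace IsVNMPreference

lemma refl (hR : N.IsVNMPreference R) (x : Y) : R x x := (hR.total x x).elim id id

lemma antisymmRel_trans (hR : N.IsVNMPreference R) {x y z : Y} (hxy : AntisymmRel R x y)
    (hyz : AntisymmRel R y z) : AntisymmRel R x z :=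
  ⟨hR.trans hxy.1 hyz.1, hR.trans hyz.2 hxy.2⟩

lemma exists_ge_both (hR : N.IsVNMPreference R) (x y : Y) : ∃ z, R z x ∧ R z y := by
  rcases hR.total x y with h | h
  exacts [⟨x, hR.refl x, h⟩, ⟨y, h, hR.refl y⟩]

lemma exists_le_both (hR : N.IsVNMPreference R) (x y : Y) : ∃ z, R x z ∧ R y z := by
  rcases hR.total x y with h | h
  exacts [⟨y, h, hR.refl y⟩, ⟨x, hR.refl x, h⟩]

lemma mix_between (hR : N.IsVNMPreference R) {x y : Y} (hxy : R x y) {l : ℝ} (hl : l ∈ I) :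
    R x (N.mix x l y) ∧ R (N.mix x l y) y := by
  rcases hl.2.eq_or_lt with rfl | hl1
  · rw [N.mix_one]; exact ⟨hR.refl x, hxy⟩
  rcases hl.1.eq_or_lt with rfl | hl0
  · rw [N.mix_zero]; exact ⟨hxy, hR.refl y⟩
  constructor
  · have h := (hR.indep x y x (1 - l) (Ioo.one_sub_mem ⟨hl0, hl1⟩)).1 hxy
    rwa [N.mix_self x (Icc.one_sub_mem hl), N.mix_comm y x _ (Icc.one_sub_mem hl),
      sub_sub_cancel] at h
  · simpa [N.mix_self y hl] using (hR.indep x y y l ⟨hl0, hl1⟩).1 hxy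

lemma mix_le (hR : N.IsVNMPreference R) {c z w : Y} (hz : R c z) (hw : R c w) {l : ℝ}
    (hl : l ∈ I) : R c (N.mix z l w) := by
  rcases hR.total z w with h | h
  · exact hR.trans hz (hR.mix_between h hl).1
  · rw [N.mix_comm z w l hl]
    exact hR.trans hw (hR.mix_between h (Icc.one_sub_mem hl)).1

lemma le_mix (hR : N.IsVNMPreference R) {c z w : Y} (hz : R z c) (hw : R w c) {l : ℝ}
    (hl : l ∈ I) : R (N.mix z l w) c := by
  rcases hR.total z w with h | h
  · exact hR.trans (hR.mix_between h hl).2 hw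
  · rw [N.mix_comm z w l hl]
    exact hR.trans (hR.mix_between h (Icc.one_sub_mem hl)).2 hz

lemma strictP_mix (hR : N.IsVNMPreference R) {x y : Y} (hxy : strictP R x y) {l : ℝ}
    (hl0 : 0 < l) (hl1 : l ≤ 1) (z : Y) : strictP R (N.mix x l z) (N.mix y l z) := by
  rcases hl1.eq_or_lt with rfl | hl1
  · rwa [N.mix_one, N.mix_one]
  unfold strictP
  rwa [← hR.indep x y z l ⟨hl0, hl1⟩, ← hR.indep y x z l ⟨hl0, hl1⟩]

lemma strictP_mix_mix (hR : N.IsVNMPreference R) {x y : Y} (hxy : strictP R x y) {l m : ℝ}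
    (hm0 : 0 ≤ m) (hml : m < l) (hl1 : l ≤ 1) :
    strictP R (N.mix x l y) (N.mix x m y) := by
  have hl0 : 0 < l := hm0.trans_lt hml
  have hxly : strictP R (N.mix x l y) y := by
    simpa [N.mix_self y ⟨hl0.le, hl1⟩] using hR.strictP_mix hxy hl0 hl1 y
  have hml' : m / l ∈ Ico (0 : ℝ) 1 := ⟨div_nonneg hm0 hl0.le, (div_lt_one hl0).2 hml⟩
  -- `x m y` is the mixture `y (1 - m / l) (x l y)`, strictly below `x l y`.
  rw [← div_mul_cancel₀ m hl0.ne', ← N.mix_assoc x y _ ⟨hml'.1, hml'.2.le⟩ l ⟨hl0.le, hl1⟩,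
    N.mix_comm _ y _ ⟨hml'.1, hml'.2.le⟩]
  simpa [N.mix_self _ (Icc.one_sub_mem ⟨hml'.1, hml'.2.le⟩)] using
    hR.strictP_mix hxly (sub_pos.2 hml'.2) (by linarith [hml'.1]) (N.mix x l y)

lemma antisymmRel_mix_left (hR : N.IsVNMPreference R) {z z' : Y} (h : AntisymmRel R z z')
    (w : Y) {l : ℝ} (hl : l ∈ I) : AntisymmRel R (N.mix z l w) (N.mix z' l w) := by
  rcases hl.2.eq_or_lt with rfl | hl1
  · rwa [N.mix_one, N.mix_one]
  rcases hl.1.eq_or_lt with rfl | hl0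
  · rw [N.mix_zero, N.mix_zero]; exact ⟨hR.refl w, hR.refl w⟩
  exact ⟨(hR.indep z z' w l ⟨hl0, hl1⟩).1 h.1, (hR.indep z' z w l ⟨hl0, hl1⟩).1 h.2⟩

lemma antisymmRel_mix_right (hR : N.IsVNMPreference R) (z : Y) {w w' : Y}
    (h : AntisymmRel R w w') {l : ℝ} (hl : l ∈ I) :
    AntisymmRel R (N.mix z l w) (N.mix z l w') := by
  rw [N.mix_comm z w l hl, N.mix_comm z w' l hl]
  exact hR.antisymmRel_mix_left h z (Icc.one_sub_mem hl)

/-- By continuity, `[0, 1]` is covered by two closed sets, each nonempty, so by connectedness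
they meet. -/
lemma exists_antisymmRel_mix (hR : N.IsVNMPreference R) {x y z : Y} (hxz : R x z)
    (hzy : R z y) : ∃ l ∈ I, AntisymmRel R z (N.mix x l y) := by
  obtain ⟨hge, hle⟩ := hR.closed x z y
  obtain ⟨l, -, ⟨hl, h₁⟩, -, h₂⟩ := isPreconnected_closed_iff.1 isPreconnected_Icc _ _ hge hle
    (fun l hl => (hR.total (N.mix x l y) z).imp (⟨hl, ·⟩) (⟨hl, ·⟩))
    ⟨1, one_mem, one_mem, by rwa [N.mix_one]⟩ ⟨0, zero_mem, zero_mem, by rwa [N.mix_zero]⟩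
  exact ⟨l, hl, h₂, h₁⟩

lemma strictP_of_le_of_strictP_of_le (hR : N.IsVNMPreference R) {a b c d : Y} (hac : R a c)
    (hcd : strictP R c d) (hdb : R d b) : strictP R a b :=
  ⟨hR.trans (hR.trans hac hcd.1) hdb, fun hba => hcd.2 (hR.trans (hR.trans hdb hba) hac)⟩

lemma le_iff_of_antisymmRel_mix (hR : N.IsVNMPreference R) {a b z w : Y} (hab : strictP R a b)
    {l m : ℝ} (hl : l ∈ I) (hm : m ∈ I) (hz : AntisymmRel R z (N.mix a l b))
    (hw : AntisymmRel R w (N.mix a m b)) : R z w ↔ m ≤ l := by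
  refine ⟨fun h => le_of_not_gt fun hlm => ?_, fun h => ?_⟩
  · exact (hR.strictP_mix_mix hab hl.1 hlm hm.2).2 (hR.trans (hR.trans hz.2 h) hw.1)
  rcases h.eq_or_lt with rfl | hml
  · exact hR.trans hz.1 hw.2
  · exact hR.trans (hR.trans hz.1 (hR.strictP_mix_mix hab hm.1 hml hl.2).1) hw.2

end IsVNMPreference

open Classical in
variable (N R) in
/-- The `l` with `z ~ a l b` (junk value `0` when there is none). -/
noncomputable def coord (a b z : Y) : ℝ :=
  if h : ∃ l ∈ I, AntisymmRel R z (N.mix a l b) then h.choose else 0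

variable (N R) in
noncomputable def normCoord (e₁ e₀ a b z : Y) : ℝ :=
  (N.coord R a b z - N.coord R a b e₀) / (N.coord R a b e₁ - N.coord R a b e₀)

open Classical in
variable (N R) in
/-- Any segment containing `e₁`, `e₀` and `z` gives the same value (`vnmUtility_eq`). -/
noncomputable def vnmUtility (e₁ e₀ z : Y) : ℝ :=
  N.normCoord R e₁ e₀ (if R z e₁ then z else e₁) (if R e₀ z then z else e₀) z

namespace IsVNMPreference

variable {a b z w : Y}

lemma coord_spec (hR : N.IsVNMPreference R) (haz : R a z) (hzb : R z b) :
    N.coord R a b z ∈ I ∧ AntisymmRel R z (N.mix a (N.coord R a b z) b) := by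
  have h := hR.exists_antisymmRel_mix haz hzb
  rw [coord, dif_pos h]
  exact h.choose_spec

lemma coord_eq (hR : N.IsVNMPreference R) (hab : strictP R a b) {l : ℝ} (hl : l ∈ I)
    (hz : AntisymmRel R z (N.mix a l b)) : N.coord R a b z = l := by
  have hab' := hR.mix_between hab.1 hl
  obtain ⟨hc, hzc⟩ := hR.coord_spec (hR.trans hab'.1 hz.2) (hR.trans hz.1 hab'.2)
  have h := hR.le_iff_of_antisymmRel_mix hab hl hc hz hzc
  have h' := hR.le_iff_of_antisymmRel_mix hab hc hl hzc hz
  exact le_antisymm (h.1 (hR.refl z)) (h'.1 (hR.refl z))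

lemma coord_le_coord_iff (hR : N.IsVNMPreference R) (hab : strictP R a b) (haz : R a z)
    (hzb : R z b) (haw : R a w) (hwb : R w b) :
    N.coord R a b w ≤ N.coord R a b z ↔ R z w :=
  let hz := hR.coord_spec haz hzb
  let hw := hR.coord_spec haw hwb
  (hR.le_iff_of_antisymmRel_mix hab hz.1 hw.1 hz.2 hw.2).symm

lemma coord_lt_coord (hR : N.IsVNMPreference R) (hab : strictP R a b) (haz : R a z)
    (hzb : R z b) (haw : R a w) (hwb : R w b) (hzw : strictP R z w) :
    N.coord R a b w < N.coord R a b z :=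
  lt_of_not_ge fun h => hzw.2 ((hR.coord_le_coord_iff hab haw hwb haz hzb).1 h)

lemma antisymmRel_mix_mix_coord (hR : N.IsVNMPreference R) (haz : R a z) (hzb : R z b)
    (haw : R a w) (hwb : R w b) {l : ℝ} (hl : l ∈ I) :
    AntisymmRel R (N.mix z l w)
      (N.mix a (l * N.coord R a b z + (1 - l) * N.coord R a b w) b) := by
  obtain ⟨hcz, hz⟩ := hR.coord_spec haz hzb
  obtain ⟨hcw, hw⟩ := hR.coord_spec haw hwb
  rw [← N.mix_mix a b hcz hcw hl]
  exact hR.antisymmRel_trans (hR.antisymmRel_mix_left hz w hl)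
    (hR.antisymmRel_mix_right _ hw hl)

lemma coord_mix (hR : N.IsVNMPreference R) (hab : strictP R a b) (haz : R a z) (hzb : R z b)
    (haw : R a w) (hwb : R w b) {l : ℝ} (hl : l ∈ I) :
    N.coord R a b (N.mix z l w) = l * N.coord R a b z + (1 - l) * N.coord R a b w :=
  hR.coord_eq hab (convex_comb_mem hl (hR.coord_spec haz hzb).1 (hR.coord_spec haw hwb).1)
    (hR.antisymmRel_mix_mix_coord haz hzb haw hwb hl)

lemma coord_of_le (hR : N.IsVNMPreference R) {c d : Y} (hab : strictP R a b) (hac : R a c)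
    (hdb : R d b) (hcz : R c z) (hzd : R z d) :
    N.coord R a b z =
      N.coord R c d z * N.coord R a b c + (1 - N.coord R c d z) * N.coord R a b d := by
  obtain ⟨hμ, hz⟩ := hR.coord_spec hcz hzd
  have hcd := hR.trans hcz hzd
  refine hR.coord_eq hab (convex_comb_mem hμ ?_ ?_) (hR.antisymmRel_trans hz
    (hR.antisymmRel_mix_mix_coord hac (hR.trans hcd hdb) (hR.trans hac hcd) hdb hμ))
  exacts [(hR.coord_spec hac (hR.trans hcd hdb)).1, (hR.coord_spec (hR.trans hac hcd) hdb).1]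

variable {e₁ e₀ : Y}

lemma normCoord_of_le (hR : N.IsVNMPreference R) (he : strictP R e₁ e₀) {A B : Y}
    (hAa : R A a) (hbB : R b B) (ha₁ : R a e₁) (h₀b : R e₀ b) (haz : R a z) (hzb : R z b) :
    N.normCoord R e₁ e₀ A B z = N.normCoord R e₁ e₀ a b z := by
  have hab := hR.strictP_of_le_of_strictP_of_le ha₁ he h₀b
  have hAB := hR.strictP_of_le_of_strictP_of_le hAa hab hbB
  have hD : N.coord R A B b < N.coord R A B a :=
    hR.coord_lt_coord hAB hAa (hR.trans hab.1 hbB) (hR.trans hAa hab.1) hbB hab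
  have hA₀ := hR.coord_of_le hAB hAa hbB (hR.trans ha₁ he.1) h₀b
  have hA (x : Y) (hax : R a x) (hxb : R x b) :
      N.coord R A B x - N.coord R A B e₀ =
        (N.coord R a b x - N.coord R a b e₀) * (N.coord R A B a - N.coord R A B b) := by
    rw [hR.coord_of_le hAB hAa hbB hax hxb, hA₀]
    ring
  rw [normCoord, normCoord, hA z haz hzb, hA e₁ ha₁ (hR.trans he.1 h₀b),
    mul_div_mul_right _ _ (sub_pos.2 hD).ne']

lemma vnmUtility_eq (hR : N.IsVNMPreference R) (he : strictP R e₁ e₀) (ha₁ : R a e₁)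
    (h₀b : R e₀ b) (haz : R a z) (hzb : R z b) :
    N.vnmUtility R e₁ e₀ z = N.normCoord R e₁ e₀ a b z := by
  classical
  set a' := if R z e₁ then z else e₁
  set b' := if R e₀ z then z else e₀
  have ha' : R a' e₁ ∧ R a' z := by
    by_cases h : R z e₁
    · simp only [a', if_pos h]; exact ⟨h, hR.refl z⟩
    · simp only [a', if_neg h]; exact ⟨hR.refl e₁, (hR.total z e₁).resolve_left h⟩
  have hb' : R e₀ b' ∧ R z b' := by
    by_cases h : R e₀ z
    · simp only [b', if_pos h]; exact ⟨h, hR.refl z⟩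
    · simp only [b', if_neg h]; exact ⟨hR.refl e₀, (hR.total e₀ z).resolve_left h⟩
  obtain ⟨A, hAa, hAa'⟩ := hR.exists_ge_both a a'
  obtain ⟨B, hbB, hb'B⟩ := hR.exists_le_both b b'
  rw [vnmUtility, ← hR.normCoord_of_le he hAa' hb'B ha'.1 hb'.1 ha'.2 hb'.2,
    hR.normCoord_of_le he hAa hbB ha₁ h₀b haz hzb]

lemma exists_envelope (hR : N.IsVNMPreference R) (z w : Y) :
    ∃ a b, R a e₁ ∧ R e₀ b ∧ R a z ∧ R z b ∧ R a w ∧ R w b := by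
  obtain ⟨c, hcz, hcw⟩ := hR.exists_ge_both z w
  obtain ⟨a, hac, ha₁⟩ := hR.exists_ge_both c e₁
  obtain ⟨d, hzd, hwd⟩ := hR.exists_le_both z w
  obtain ⟨b, hdb, h₀b⟩ := hR.exists_le_both d e₀
  exact ⟨a, b, ha₁, h₀b, hR.trans hac hcz, hR.trans hzd hdb, hR.trans hac hcw,
    hR.trans hwd hdb⟩

/-- The Herstein–Milnor expected utility theorem. -/
theorem exists_linear_rep (hR : N.IsVNMPreference R) (he : strictP R e₁ e₀) :
    ∃ U : Y → ℝ, N.linear U ∧ ∀ x y, R x y ↔ U y ≤ U x := by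
  refine ⟨N.vnmUtility R e₁ e₀, fun z w l hl => ?_, fun z w => ?_⟩
  all_goals
    obtain ⟨a, b, ha₁, h₀b, haz, hzb, haw, hwb⟩ := hR.exists_envelope (e₁ := e₁) (e₀ := e₀) z w
    have hab := hR.strictP_of_le_of_strictP_of_le ha₁ he h₀b
    have hD := hR.coord_lt_coord hab ha₁ (hR.trans he.1 h₀b) (hR.trans ha₁ he.1) h₀b he
    rw [hR.vnmUtility_eq he ha₁ h₀b haz hzb, hR.vnmUtility_eq he ha₁ h₀b haw hwb]
  · rw [hR.vnmUtility_eq he ha₁ h₀b (hR.mix_le haz haw hl) (hR.le_mix hzb hwb hl), normCoord,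
      normCoord, normCoord, hR.coord_mix hab haz hzb haw hwb hl]
    field_simp
    ring
  · rw [normCoord, normCoord, div_le_div_iff_of_pos_right (sub_pos.2 hD), sub_le_sub_iff_right,
      hR.coord_le_coord_iff hab haz hzb haw hwb]

end IsVNMPreference

end MixtureSpace

section Streams

variable {X : Type*} (M : MixtureSpace X)

/-- For `ι = Fin n`, the mixture operation is `mixStream M` up to unfolding. -/
def piMixture (ι : Type*) : MixtureSpace (ι → X) where
  mix x l y t := M.mix (x t) l (y t)
  mix_one _ _ := funext fun _ => M.mix_one _ _
  mix_comm _ _ l hl := funext fun _ => M.mix_comm _ _ l hl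
  mix_assoc _ _ l hl m hm := funext fun _ => M.mix_assoc _ _ l hl m hm

variable {M} {ι : Type*} [DecidableEq ι]

lemma MixtureSpace.linear.comp_update {U : (ι → X) → ℝ} (hU : (piMixture M ι).linear U)
    (x : ι → X) (i : ι) : M.linear fun a => U (Function.update x i a) := by
  intro a b l hl
  convert hU (Function.update x i a) (Function.update x i b) l hl using 2
  funext t
  by_cases ht : t = i
  · subst ht; simp [piMixture]
  · simp [piMixture, Function.update_of_ne ht, M.mix_self _ hl]

lemma MixtureSpace.linear.sub_eq_sum_update [Fintype ι] {U : (ι → X) → ℝ}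
    (hU : (piMixture M ι).linear U) (x y : ι → X) :
    U y - U x = ∑ i, (U (Function.update x i (y i)) - U x) := by
  suffices h : ∀ s : Finset ι,
      U (s.piecewise y x) - U x = ∑ i ∈ s, (U (Function.update x i (y i)) - U x) by
    simpa using h Finset.univ
  intro s
  induction s using Finset.induction_on with
  | empty => simp
  | insert i s hi ih =>
    -- the two `1/2`-mixtures agree in every period, so linearity of `U` splits off period `i`
    have hmid : (piMixture M ι).mix ((insert i s).piecewise y x) (1 / 2) x =
        (piMixture M ι).mix (s.piecewise y x) (1 / 2) (Function.update x i (y i)) := by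
      funext t
      by_cases ht : t = i
      · subst ht
        simp only [piMixture, Finset.piecewise_insert_self, Finset.piecewise_eq_of_notMem _ _ _ hi,
          Function.update_self]
        rw [M.mix_comm _ _ _ (by norm_num)]
        norm_num
      · simp [piMixture, ht]
    have h := congrArg U hmid
    rw [hU _ _ _ (by norm_num), hU _ _ _ (by norm_num)] at h
    rw [Finset.sum_insert hi, ← ih]
    linarith

lemma MixtureSpace.linear.exists_nonneg_sub_eq_mul_sub {u φ : X → ℝ} (hu : M.linear u)
    (hφ : M.linear φ) (hmono : ∀ a b, u b ≤ u a → φ b ≤ φ a) {p q : X} (hpq : u q < u p) :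
    ∃ c, 0 ≤ c ∧ ∀ a b, φ a - φ b = c * (u a - u b) := by
  have hcomb : ∀ x y z : X, ∀ l ∈ I, u z = l * u x + (1 - l) * u y →
      φ z = l * φ x + (1 - l) * φ y := by
    intro x y z l hl h
    rw [← hφ x y l hl]
    exact le_antisymm (hmono _ _ (by rw [hu x y l hl, h])) (hmono _ _ (by rw [hu x y l hl, h]))
  have haffine : ∀ x y z : X, u y < u x → u y ≤ u z → u z ≤ u x →
      (φ z - φ y) * (u x - u y) = (φ x - φ y) * (u z - u y) := by
    intro x y z hyx hyz hzx
    have hne : u x - u y ≠ 0 := (sub_pos.2 hyx).ne'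
    rw [hcomb x y z ((u z - u y) / (u x - u y)) (div_mem (by linarith) (by linarith)
      (by linarith)) (by field_simp; ring)]
    field_simp
    ring
  have key : ∀ c : X, (φ c - φ q) * (u p - u q) = (φ p - φ q) * (u c - u q) := by
    intro c
    rcases lt_or_ge (u c) (u q) with hcq | hqc
    · linear_combination -haffine p c q (by linarith) hcq.le hpq.le
    rcases le_or_gt (u c) (u p) with hcp | hpc
    · exact haffine p q c hpq hqc hcp
    · linear_combination -haffine c q p (by linarith) hpq.le hpc.le
  refine ⟨(φ p - φ q) / (u p - u q), div_nonneg (sub_nonneg.2 (hmono _ _ hpq.le))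
    (sub_pos.2 hpq).le, fun a b => ?_⟩
  rw [div_mul_eq_mul_div, eq_div_iff (sub_pos.2 hpq).ne']
  linear_combination key a - key b

end Streams

section WeightedSum

variable {X ι : Type*} [Fintype ι] {M : MixtureSpace X}

def weightedSum (w : ι → ℝ) (u : X → ℝ) (x : ι → X) : ℝ := ∑ t, w t * u (x t)

lemma weightedSum_update [DecidableEq ι] (w : ι → ℝ) (u : X → ℝ) (x : ι → X) (i : ι) (a : X) :
    weightedSum w u (Function.update x i a) = weightedSum w u x + w i * (u a - u (x i)) := by
  have h (t : ι) : w t * u (Function.update x i a t) =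
      w t * u (x t) + if t = i then w i * (u a - u (x i)) else 0 := by
    by_cases ht : t = i
    · subst ht; simp only [Function.update_self, if_true]; ring
    · simp [ht]
  simp only [weightedSum, h, Finset.sum_add_distrib, Finset.sum_ite_eq', Finset.mem_univ, if_true]

lemma weightedSum_const (w : ι → ℝ) (u : X → ℝ) (a : X) :
    weightedSum w u (fun _ => a) = (∑ t, w t) * u a :=
  (Finset.sum_mul _ _ _).symm

lemma MixtureSpace.linear.weightedSum {u : X → ℝ} (hu : M.linear u) (w : ι → ℝ) :
    (piMixture M ι).linear (weightedSum w u) := by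
  intro x y l hl
  simp only [_root_.weightedSum, piMixture, hu _ _ l hl, Finset.mul_sum, ← Finset.sum_add_distrib]
  exact Finset.sum_congr rfl fun _ _ => by ring

end WeightedSum

theorem exists_aaRep {X : Type*} {M : MixtureSpace X} {n : ℕ}
    {R : (Fin n → X) → (Fin n → X) → Prop} (hR : (piMixture M (Fin n)).IsVNMPreference R)
    (hF5 : AxF5 R) {x y : Fin n → X} (hxy : strictP R x y) : ∃ u w, AARep M R u w := by
  obtain ⟨U, hU, hUR⟩ := hR.exists_linear_rep hxy
  set u : X → ℝ := fun a => U fun _ => a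
  have hu : M.linear u := fun a b l hl => hU _ _ l hl
  have hRu (a b : X) : R (fun _ => a) (fun _ => b) ↔ u b ≤ u a := hUR _ _
  obtain ⟨t, ht⟩ : ∃ t, u (y t) < u (x t) := by
    by_contra! h
    exact hxy.2 (hF5 y x fun t => (hRu _ _).2 (h t))
  have hmono (i : Fin n) (a b : X) (hab : u b ≤ u a) :
      U (Function.update y i b) ≤ U (Function.update y i a) := by
    refine (hUR _ _).1 (hF5 _ _ fun s => ?_)
    by_cases hs : s = i
    · subst hs; simpa using (hRu a b).2 hab
    · simpa [Function.update_of_ne hs] using hR.refl _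
  choose w hw0 hw using fun i =>
    hu.exists_nonneg_sub_eq_mul_sub (hU.comp_update y i) (hmono i) ht
  have hUw (z : Fin n → X) : U z - U y = weightedSum w u z - weightedSum w u y := by
    rw [hU.sub_eq_sum_update y z, weightedSum, weightedSum, ← Finset.sum_sub_distrib]
    refine Finset.sum_congr rfl fun i _ => ?_
    simpa [← mul_sub] using hw i (z i) (y i)
  have hrep (z z' : Fin n → X) : R z z' ↔ weightedSum w u z' ≤ weightedSum w u z := by
    rw [hUR, ← sub_le_sub_iff_right (U y), hUw, hUw, sub_le_sub_iff_right]
  refine ⟨u, w, hu, ⟨x t, y t, ht.ne'⟩, hw0, ?_, hrep⟩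
  by_contra! h
  obtain rfl : w = 0 := funext fun i => le_antisymm (h i) (hw0 i)
  exact hxy.2 ((hrep _ _).2 (by simp [weightedSum]))

lemma MixtureSpace.IsVNMPreference.of_linear {Y : Type*} {N : MixtureSpace Y}
    {R : Y → Y → Prop} {V : Y → ℝ} (hV : N.linear V) (hR : ∀ x y, R x y ↔ V y ≤ V x) :
    N.IsVNMPreference R where
  total x y := by simp only [hR]; exact le_total _ _
  trans x y z := by simp only [hR]; exact fun hxy hyz => hyz.trans hxy
  indep x y z l hl := by
    rw [hR, hR, hV _ _ l (Ioo_subset_Icc_self hl), hV _ _ l (Ioo_subset_Icc_self hl),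
      add_le_add_iff_right, mul_le_mul_iff_right₀ hl.1]
  closed x y z := by
    have h (P : ℝ → Prop) : {l | l ∈ I ∧ P (V (N.mix x l z))} =
        I ∩ {l | P (l * V x + (1 - l) * V z)} :=
      Set.ext fun l => and_congr_right fun hl => by rw [Set.mem_ofPred_eq, hV _ _ l hl]
    simp only [hR]
    rw [h (V y ≤ ·), h (· ≤ V y)]
    exact ⟨isClosed_Icc.inter (isClosed_le continuous_const (by fun_prop)),
      isClosed_Icc.inter (isClosed_le (by fun_prop) continuous_const)⟩

namespace AARep

variable {X : Type*} {M : MixtureSpace X} {n : ℕ} {R : (Fin n → X) → (Fin n → X) → Prop}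
  {u : X → ℝ} {w : Fin n → ℝ}

lemma rel_iff (h : AARep M R u w) (x y : Fin n → X) :
    R x y ↔ weightedSum w u y ≤ weightedSum w u x :=
  h.2.2.2.2 x y

lemma strictP_iff (h : AARep M R u w) (x y : Fin n → X) :
    strictP R x y ↔ weightedSum w u y < weightedSum w u x := by
  rw [strictP, h.rel_iff, h.rel_iff, lt_iff_le_not_ge]

lemma exists_lt (h : AARep M R u w) : ∃ p q, u q < u p := by
  obtain ⟨a, b, hab⟩ := h.2.1
  rcases hab.lt_or_gt with hab | hab
  exacts [⟨b, a, hab⟩, ⟨a, b, hab⟩]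

lemma rel_const_iff (h : AARep M R u w) (a b : X) :
    R (fun _ => a) (fun _ => b) ↔ u b ≤ u a := by
  obtain ⟨t, ht⟩ := h.2.2.2.1
  have hsum : 0 < ∑ t, w t := Finset.sum_pos' (fun t _ => h.2.2.1 t) ⟨t, Finset.mem_univ t, ht⟩
  rw [h.rel_iff, weightedSum_const, weightedSum_const, mul_le_mul_iff_right₀ hsum]

lemma strictP_const_iff (h : AARep M R u w) (a b : X) :
    strictP R (fun _ => a) (fun _ => b) ↔ u b < u a := by
  rw [strictP, h.rel_const_iff, h.rel_const_iff, lt_iff_le_not_ge]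

lemma isVNMPreference (h : AARep M R u w) : (piMixture M (Fin n)).IsVNMPreference R :=
  .of_linear (h.1.weightedSum w) h.rel_iff

lemma axF1 (h : AARep M R u w) : AxF1 R := ⟨h.isVNMPreference.total, h.isVNMPreference.trans⟩

lemma axF3 (h : AARep M R u w) : AxF3 M R := h.isVNMPreference.indep

lemma axF4 (h : AARep M R u w) : AxF4 M R := h.isVNMPreference.closed

lemma axF5 (h : AARep M R u w) : AxF5 R := fun x y hxy =>
  (h.rel_iff x y).2 (Finset.sum_le_sum fun t _ =>
    mul_le_mul_of_nonneg_left ((h.rel_const_iff _ _).1 (hxy t)) (h.2.2.1 t))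

lemma axF2'_iff (h : AARep M R u w) (h0 : 0 < n) : AxF2' R h0 ↔ 0 < w ⟨0, h0⟩ := by
  simp only [AxF2', h.strictP_iff, weightedSum_update, add_lt_add_iff_left]
  constructor
  · rintro ⟨a, b, x, hab⟩
    refine (h.2.2.1 _).lt_of_ne fun hw => ?_
    simp [← hw] at hab
  · intro hw
    obtain ⟨p, q, hpq⟩ := h.exists_lt
    exact ⟨p, q, fun _ => p, mul_lt_mul_of_pos_left (sub_lt_sub_right hpq _) hw⟩

lemma axF6_iff (h : AARep M R u w) (h0 : 0 < n) (h1 : 1 < n) :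
    AxF6 R h0 h1 ↔ w ⟨1, h1⟩ < w ⟨0, h0⟩ := by
  have hne : (⟨1, h1⟩ : Fin n) ≠ ⟨0, h0⟩ := by simp
  have hswap (x : Fin n → X) (a b : X) :
      strictP R (Function.update (Function.update x ⟨0, h0⟩ a) ⟨1, h1⟩ b)
        (Function.update (Function.update x ⟨0, h0⟩ b) ⟨1, h1⟩ a) ↔
      0 < (w ⟨0, h0⟩ - w ⟨1, h1⟩) * (u a - u b) := by
    simp only [h.strictP_iff, weightedSum_update, Function.update_of_ne hne]
    constructor <;> intro <;> linarith
  simp only [AxF6, hswap, h.strictP_const_iff]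
  constructor
  · intro hF6
    obtain ⟨p, q, hpq⟩ := h.exists_lt
    exact sub_pos.1 (pos_of_mul_pos_left (hF6 p q hpq (fun _ => p)) (sub_pos.2 hpq).le)
  · exact fun hw a b hab _ => mul_pos (sub_pos.2 hw) (sub_pos.2 hab)

end AARep

lemma AARep.axF7_iff {X : Type*} {M : MixtureSpace X} {m : ℕ}
    {R : (Fin (m + 1) → X) → (Fin (m + 1) → X) → Prop} {u : X → ℝ} {w : Fin (m + 1) → ℝ}
    (h : AARep M R u w) (h0 : 0 < m + 1) :
    AxF7 R h0 ↔ ∀ z z' : Fin m → X,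
      (weightedSum (fun i => w i.succ) u z' ≤ weightedSum (fun i => w i.succ) u z ↔
        weightedSum (fun i => w i.castSucc) u z' ≤ weightedSum (fun i => w i.castSucc) u z) := by
  have hupdate (x : Fin (m + 1) → X) (a : X) : weightedSum w u (Function.update x ⟨0, h0⟩ a) =
      w 0 * u a + weightedSum (fun i => w i.succ) u (Fin.tail x) := by
    simp [weightedSum, Fin.sum_univ_succ, Fin.tail]
  have hshift (x : Fin (m + 1) → X) (a : X) : weightedSum w u (shiftApp x a) =
      weightedSum (fun i => w i.castSucc) u (Fin.tail x) + w (Fin.last m) * u a := by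
    simp [weightedSum, Fin.sum_univ_castSucc, shiftApp, Fin.tail, Fin.succ]
  simp only [AxF7, h.rel_iff, hupdate, hshift, add_le_add_iff_left, add_le_add_iff_right]
  constructor
  · intro hF7 z z'
    obtain ⟨a, -⟩ := h.exists_lt
    simpa using hF7 a (Fin.cons a z) (Fin.cons a z')
  · exact fun hF7 _ x y => hF7 (Fin.tail x) (Fin.tail y)

lemma mul_eq_mul_of_le_iff {A B C D : ℝ} (hA : 0 < A) (hB : 0 < B) (hC : 0 ≤ C) (hD : 0 ≤ D)
    (h : ∀ α ∈ I, ∀ β ∈ I, (C * β ≤ A * α ↔ D * β ≤ B * α)) : A * D = B * C := by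
  -- at `(α, β) = (C, A) / (A + C)` the first inequality is an equality, and at
  -- `(α, β) = (D, B) / (B + D)` the second one is
  have h₁ := (h (C / (A + C)) (div_mem hC (by positivity) (by linarith)) (A / (A + C))
    (div_mem hA.le (by positivity) (by linarith))).1 (by rw [mul_div, mul_div, mul_comm])
  have h₂ := (h (D / (B + D)) (div_mem hD (by positivity) (by linarith)) (B / (B + D))
    (div_mem hB.le (by positivity) (by linarith))).2 (by rw [mul_div, mul_div, mul_comm])
  rw [mul_div, mul_div, div_le_div_iff_of_pos_right (by positivity)] at h₁ h₂
  linarith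

section Weights

variable {X ι : Type*} [Fintype ι] [DecidableEq ι] {M : MixtureSpace X} {u : X → ℝ}
  {p q : X} {v v' : ι → ℝ}

lemma weight_mul_le_iff_of_weightedSum_le_iff (hu : M.linear u) (hpq : u q < u p)
    (h : ∀ z z' : ι → X, (weightedSum v u z' ≤ weightedSum v u z ↔
      weightedSum v' u z' ≤ weightedSum v' u z)) (i j : ι) {α β : ℝ} (hα : α ∈ I) (hβ : β ∈ I) :
    v j * β ≤ v i * α ↔ v' j * β ≤ v' i * α := by
  have hmix {γ : ℝ} (hγ : γ ∈ I) : u (M.mix p γ q) - u q = γ * (u p - u q) := by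
    rw [hu p q γ hγ]; ring
  simpa only [weightedSum_update, hmix hα, hmix hβ, add_le_add_iff_left, ← mul_assoc,
    mul_le_mul_iff_left₀ (sub_pos.2 hpq)] using
    h (Function.update (fun _ => q) i (M.mix p α q)) (Function.update (fun _ => q) j (M.mix p β q))

lemma pos_of_weightedSum_le_iff (hu : M.linear u) (hpq : u q < u p)
    (h : ∀ z z' : ι → X, (weightedSum v u z' ≤ weightedSum v u z ↔
      weightedSum v' u z' ≤ weightedSum v' u z)) {i : ι} (hi : 0 < v' i) : 0 < v i := by
  have := weight_mul_le_iff_of_weightedSum_le_iff hu hpq h i i zero_mem one_mem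
  simp only [mul_one, mul_zero] at this
  exact lt_of_not_ge fun hvi => hi.not_ge (this.1 hvi)

lemma mul_eq_mul_of_weightedSum_le_iff (hu : M.linear u) (hpq : u q < u p) (hv : ∀ t, 0 ≤ v t)
    (hv' : ∀ t, 0 ≤ v' t) (h : ∀ z z' : ι → X, (weightedSum v u z' ≤ weightedSum v u z ↔
      weightedSum v' u z' ≤ weightedSum v' u z)) {i : ι} (hi : 0 < v' i) (j : ι) :
    v i * v' j = v' i * v j :=
  mul_eq_mul_of_le_iff (pos_of_weightedSum_le_iff hu hpq h hi) hi (hv j) (hv' j)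
    fun _ hα _ hβ => weight_mul_le_iff_of_weightedSum_le_iff hu hpq h i j hα hβ

end Weights

lemma AARep.expRep {X : Type*} {M : MixtureSpace X} {m : ℕ}
    {R : (Fin (m + 2) → X) → (Fin (m + 2) → X) → Prop} {u : X → ℝ} {w : Fin (m + 2) → ℝ}
    (h : AARep M R u w) (hw₀ : 0 < w 0) (hw₁ : 0 < w 1) (hw₁₀ : w 1 < w 0)
    (hgeom : ∀ j : Fin (m + 1), w 1 * w j.castSucc = w 0 * w j.succ) :
    ExpRep M R u (w 1 / w 0) := by
  have hpow (t : Fin (m + 2)) : w t = w 0 * (w 1 / w 0) ^ (t : ℕ) := by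
    induction t using Fin.induction with
    | zero => simp
    | succ j ih =>
      calc w j.succ = w 1 * w j.castSucc / w 0 := by rw [hgeom, mul_div_cancel_left₀ _ hw₀.ne']
        _ = _ := by rw [ih, Fin.val_castSucc, Fin.val_succ, pow_succ]; field_simp
  have hsum (x : Fin (m + 2) → X) :
      weightedSum w u x = w 0 * ∑ t : Fin (m + 2), (w 1 / w 0) ^ (t : ℕ) * u (x t) := by
    rw [weightedSum, Finset.mul_sum]
    exact Finset.sum_congr rfl fun t _ => by rw [hpow t, mul_assoc]
  refine ⟨h.1, h.2.1, ⟨div_pos hw₁ hw₀, (div_lt_one hw₀).2 hw₁₀⟩, fun x y => ?_⟩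
  rw [h.rel_iff, hsum, hsum, mul_le_mul_iff_right₀ hw₀, ge_iff_le]

lemma ExpRep.aaRep {X : Type*} {M : MixtureSpace X} {n : ℕ}
    {R : (Fin n → X) → (Fin n → X) → Prop} {u : X → ℝ} {δ : ℝ} (h : ExpRep M R u δ)
    (h0 : 0 < n) : AARep M R u fun t => δ ^ (t : ℕ) :=
  ⟨h.1, h.2.1, fun _ => pow_nonneg h.2.2.1.1.le _, ⟨⟨0, h0⟩, by simp⟩, h.2.2.2⟩

lemma weightedSum_pow_succ {X : Type*} {m : ℕ} (δ : ℝ) (u : X → ℝ) (z : Fin m → X) :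
    weightedSum (fun i : Fin m => δ ^ (i.succ : ℕ)) u z =
      δ * weightedSum (fun i : Fin m => δ ^ (i.castSucc : ℕ)) u z := by
  simp only [weightedSum, Finset.mul_sum, Fin.val_succ, Fin.val_castSucc, pow_succ]
  exact Finset.sum_congr rfl fun _ _ => by ring

/-- Exponential discounting, finite horizon:
`≽` satisfies F1, F2′, F3–F7 iff it has an exponentially discounted expected
utility representation. -/
theorem exp_discounting_finite {X : Type*} (M : MixtureSpace X) (n : ℕ) (hn : 2 ≤ n)
    (R : (Fin n → X) → (Fin n → X) → Prop) :
    (AxF1 R ∧ AxF2' R (by omega) ∧ AxF3 M R ∧ AxF4 M R ∧ AxF5 R ∧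
      AxF6 R (by omega) (by omega) ∧ AxF7 R (by omega)) ↔
    ∃ (u : X → ℝ) (δ : ℝ), ExpRep M R u δ := by
  obtain ⟨m, rfl⟩ : ∃ m, n = m + 2 := ⟨n - 2, by omega⟩
  constructor
  · rintro ⟨hF1, hF2, hF3, hF4, hF5, hF6, hF7⟩
    have ⟨_, _, _, hab⟩ := hF2
    obtain ⟨u, w, h⟩ := exists_aaRep ⟨hF1.1, hF1.2, hF3, hF4⟩ hF5 hab
    obtain ⟨p, q, hpq⟩ := h.exists_lt
    have hw₀ : 0 < w 0 := (h.axF2'_iff _).1 hF2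
    have hw₁₀ : w 1 < w 0 := (h.axF6_iff _ _).1 hF6
    have hF7' := (h.axF7_iff _).1 hF7
    have hw₁ : 0 < w 1 := pos_of_weightedSum_le_iff (i := 0) h.1 hpq hF7' hw₀
    refine ⟨u, w 1 / w 0, h.expRep hw₀ hw₁ hw₁₀ fun j => ?_⟩
    simpa using mul_eq_mul_of_weightedSum_le_iff h.1 hpq (fun _ => h.2.2.1 _)
      (fun _ => h.2.2.1 _) hF7' (i := 0) hw₀ j
  · rintro ⟨u, δ, h⟩
    have hδ := h.2.2.1
    have hw := h.aaRep (by omega)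
    refine ⟨hw.axF1, (hw.axF2'_iff _).2 (by simp), hw.axF3, hw.axF4, hw.axF5,
      (hw.axF6_iff _ _).2 (by simpa using hδ.2), (hw.axF7_iff _).2 fun z z' => ?_⟩
    rw [weightedSum_pow_succ, weightedSum_pow_succ, mul_le_mul_iff_right₀ hδ.1]
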